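/- A sequence (x_n, r_n) in C × D converges to (x,r) in the metric d_T if and only if r_n → r in ℝ^d and x_n → x uniformly on [-τ̄,T]. -/

import Mathlib

open Set

variable {d : ℕ} {τb T Kτ : ℝ} {D : Set (EuclideanSpace ℝ (Fin d))}

/-- The delay-sup term of the distance `d_T` on `C([-τ̄,T],ℝ) × D`. -/
noncomputable def supTerm (τb T Kτ : ℝ) {d : ℕ} (D : Set (EuclideanSpace ℝ (Fin d)))
    (p q : C(Icc (-τb) T, ℝ) × D) : ℝ :=
  sSup {v : ℝ | ∃ t a b : ℝ, ∃ (ht : t ∈ Icc (0 : ℝ) T) (ha : a ∈ Icc (-τb) (0 : ℝ))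
    (hb : b ∈ Icc (-τb) (0 : ℝ)),
    |b - a| ≤ Kτ * ‖(p.2 : EuclideanSpace ℝ (Fin d)) - (q.2 : EuclideanSpace ℝ (Fin d))‖ ∧
    v = |p.1 ⟨t + a, ⟨by linarith [ht.1, ha.1], by linarith [ht.2, ha.2]⟩⟩ -
         q.1 ⟨t + b, ⟨by linarith [ht.1, hb.1], by linarith [ht.2, hb.2]⟩⟩| ^ 2}

/-- The distance `d_T` on `C([-τ̄,T],ℝ) × D`. -/
noncomputable def dT (τb T Kτ : ℝ) {d : ℕ} (D : Set (EuclideanSpace ℝ (Fin d)))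
    (p q : C(Icc (-τb) T, ℝ) × D) : ℝ :=
  Real.sqrt (‖(p.2 : EuclideanSpace ℝ (Fin d)) - (q.2 : EuclideanSpace ℝ (Fin d))‖ ^ 2 +
    supTerm τb T Kτ D p q)

/-!
`d_T²` is `‖r - r'‖²` plus the delayed sup term `S`. Taking the delays `a = b` shows
`S ≥ ‖x - y‖∞²`, while `S ≤ (‖x - y‖∞ + ω)²`, where `ω` bounds the oscillation of `y` over
time shifts of size at most `K_τ ‖r - r'‖`; by uniform continuity of `y` on the compact interval,
`ω → 0` as `r' → r`.
-/

open Filter Topology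

section Tendsto

variable {ι : Type*} {l : Filter ι} {f g : ι → ℝ}

lemma tendsto_sqrt_nhds_zero_iff (hf : ∀ i, 0 ≤ f i) :
    Tendsto (fun i => √(f i)) l (𝓝 0) ↔ Tendsto f l (𝓝 0) := by
  refine ⟨fun h => ?_, fun h => by simpa using h.sqrt⟩
  simpa [Real.sq_sqrt (hf _)] using h.pow 2

lemma tendsto_add_nhds_zero_iff_of_nonneg (hf : ∀ i, 0 ≤ f i) (hg : ∀ i, 0 ≤ g i) :
    Tendsto (fun i => f i + g i) l (𝓝 0) ↔ Tendsto f l (𝓝 0) ∧ Tendsto g l (𝓝 0) := by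
  refine ⟨fun h => ⟨?_, ?_⟩, fun ⟨hf0, hg0⟩ => by simpa using hf0.add hg0⟩
  · exact squeeze_zero hf (fun i => le_add_of_nonneg_right (hg i)) h
  · exact squeeze_zero hg (fun i => le_add_of_nonneg_left (hf i)) h

end Tendsto

section SupTerm

lemma supTerm_nonneg (p q : C(Icc (-τb) T, ℝ) × D) : 0 ≤ supTerm τb T Kτ D p q := by
  apply Real.sSup_nonneg
  rintro v ⟨t, a, b, ht, ha, hb, hab, rfl⟩
  positivity

lemma supTerm_le (p q : C(Icc (-τb) T, ℝ) × D) {c : ℝ} (hc : 0 ≤ c)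
    (h : ∀ s s' : Icc (-τb) T,
      |(s : ℝ) - s'| ≤ Kτ * ‖(p.2 : EuclideanSpace ℝ (Fin d)) - q.2‖ → |p.1 s - q.1 s'| ^ 2 ≤ c) :
    supTerm τb T Kτ D p q ≤ c := by
  refine Real.sSup_le ?_ hc
  rintro v ⟨t, a, b, ht, ha, hb, hab, rfl⟩
  refine h _ _ ?_
  simpa only [add_sub_add_left_eq_sub, abs_sub_comm] using hab

lemma sq_abs_sub_le_supTerm (hτb : 0 ≤ τb) (hT : 0 ≤ T) (hK : 0 ≤ Kτ)
    (p q : C(Icc (-τb) T, ℝ) × D) (s : Icc (-τb) T) :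
    |p.1 s - q.1 s| ^ 2 ≤ supTerm τb T Kτ D p q := by
  obtain ⟨hs₁, hs₂⟩ := s.2
  refine le_csSup ⟨(‖p.1‖ + ‖q.1‖) ^ 2, ?_⟩ ?_
  · rintro v ⟨t, a, b, ht, ha, hb, hab, rfl⟩
    gcongr
    exact (abs_sub _ _).trans (add_le_add (p.1.norm_coe_le_norm _) (q.1.norm_coe_le_norm _))
  -- write `s = max s 0 + min s 0` with `max s 0 ∈ [0, T]` and `min s 0 ∈ [-τ̄, 0]`
  have hs : (⟨max (s : ℝ) 0 + min (s : ℝ) 0, by simp [max_add_min]⟩ : Icc (-τb) T) = s :=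
    Subtype.ext (by simp [max_add_min])
  exact ⟨max s 0, min s 0, min s 0, ⟨le_max_right _ _, max_le hs₂ hT⟩,
    ⟨le_min hs₁ (by linarith), min_le_right _ _⟩, ⟨le_min hs₁ (by linarith), min_le_right _ _⟩,
    by simpa using mul_nonneg hK (norm_nonneg _), by rw [hs]⟩

lemma norm_sub_le_sqrt_supTerm (hτb : 0 ≤ τb) (hT : 0 ≤ T) (hK : 0 ≤ Kτ)
    (p q : C(Icc (-τb) T, ℝ) × D) : ‖p.1 - q.1‖ ≤ √(supTerm τb T Kτ D p q) :=
  (ContinuousMap.norm_le _ (Real.sqrt_nonneg _)).2 fun s =>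
    Real.le_sqrt_of_sq_le (by simpa using sq_abs_sub_le_supTerm hτb hT hK p q s)

lemma supTerm_le_sq_add (p q : C(Icc (-τb) T, ℝ) × D) {δ δ' : ℝ} (hpq : ‖p.1 - q.1‖ ≤ δ)
    (hq : ∀ s s' : Icc (-τb) T, |(s : ℝ) - s'| ≤ Kτ * ‖(p.2 : EuclideanSpace ℝ (Fin d)) - q.2‖ →
      dist (q.1 s) (q.1 s') ≤ δ') :
    supTerm τb T Kτ D p q ≤ (δ + δ') ^ 2 := by
  refine supTerm_le p q (sq_nonneg _) fun s s' hss' => ?_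
  gcongr
  calc |p.1 s - q.1 s'| ≤ |p.1 s - q.1 s| + |q.1 s - q.1 s'| := abs_sub_le _ _ _
    _ ≤ δ + δ' := add_le_add ((p.1 - q.1).norm_coe_le_norm s |>.trans hpq) (hq s s' hss')

lemma tendsto_sqrt_supTerm_zero {ι : Type*} {l : Filter ι} {u : ι → C(Icc (-τb) T, ℝ) × D}
    {p : C(Icc (-τb) T, ℝ) × D}
    (hr : Tendsto (fun i => ‖((u i).2 : EuclideanSpace ℝ (Fin d)) - p.2‖) l (𝓝 0))
    (hx : Tendsto (fun i => ‖(u i).1 - p.1‖) l (𝓝 0)) :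
    Tendsto (fun i => √(supTerm τb T Kτ D (u i) p)) l (𝓝 0) := by
  refine tendsto_order.2 ⟨fun a ha => .of_forall fun i => ha.trans_le (Real.sqrt_nonneg _),
    fun ε hε => ?_⟩
  obtain ⟨η, hη, hpη⟩ := Metric.uniformContinuous_iff.1
    (CompactSpace.uniformContinuous_of_continuous p.1.continuous) (ε / 3) (by positivity)
  have hdelay : Tendsto (fun i => Kτ * ‖((u i).2 : EuclideanSpace ℝ (Fin d)) - p.2‖) l (𝓝 0) := by
    simpa using hr.const_mul Kτ
  filter_upwards [hdelay.eventually_lt_const hη, hx.eventually_lt_const (by positivity : 0 < ε / 3)]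
    with i hdelay_i hx_i
  have hS := supTerm_le_sq_add (u i) p hx_i.le fun s s' hss' =>
    (hpη (by rw [Subtype.dist_eq, Real.dist_eq]; exact hss'.trans_lt hdelay_i)).le
  calc √(supTerm τb T Kτ D (u i) p) ≤ ε / 3 + ε / 3 :=
        Real.sqrt_le_iff.2 ⟨by positivity, hS⟩
    _ < ε := by linarith

end SupTerm

theorem dT_convergence_iff_general (hτb : 0 ≤ τb) (hT : 0 ≤ T) (hK : 0 ≤ Kτ)
    (u : ℕ → C(Icc (-τb) T, ℝ) × D) (p : C(Icc (-τb) T, ℝ) × D) :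
    Filter.Tendsto (fun n => dT τb T Kτ D (u n) p) Filter.atTop (nhds 0) ↔
      (Filter.Tendsto (fun n => ((u n).2 : EuclideanSpace ℝ (Fin d))) Filter.atTop
          (nhds (p.2 : EuclideanSpace ℝ (Fin d))) ∧
        Filter.Tendsto (fun n => ‖(u n).1 - p.1‖) Filter.atTop (nhds 0)) := by
  have hr_sq : ∀ n, 0 ≤ ‖((u n).2 : EuclideanSpace ℝ (Fin d)) - p.2‖ ^ 2 := fun n => sq_nonneg _
  have hS : ∀ n, 0 ≤ supTerm τb T Kτ D (u n) p := fun n => supTerm_nonneg _ _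
  unfold dT
  rw [tendsto_sqrt_nhds_zero_iff fun n => add_nonneg (hr_sq n) (hS n),
    tendsto_add_nhds_zero_iff_of_nonneg hr_sq hS, ← tendsto_sqrt_nhds_zero_iff hr_sq,
    ← tendsto_sqrt_nhds_zero_iff hS,
    tendsto_iff_norm_sub_tendsto_zero (f := fun n => ((u n).2 : EuclideanSpace ℝ (Fin d)))]
  simp only [Real.sqrt_sq (norm_nonneg _)]
  exact and_congr_right fun hr => ⟨fun hx => squeeze_zero (fun _ => norm_nonneg _)
    (fun n => norm_sub_le_sqrt_supTerm hτb hT hK (u n) p) hx, tendsto_sqrt_supTerm_zero hr⟩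

/-- a sequence `(xₙ, rₙ)` converges to `(x,r)` in the metric `d_T`
iff `rₙ → r` in `ℝ^d` and `xₙ → x` uniformly on `[-τ̄,T]`. -/
theorem dT_convergence_iff (hτb : 0 ≤ τb) (hT : 0 ≤ T) (hK : 0 ≤ Kτ) (hD : IsCompact D)
    (u : ℕ → C(Icc (-τb) T, ℝ) × D) (p : C(Icc (-τb) T, ℝ) × D) :
    Filter.Tendsto (fun n => dT τb T Kτ D (u n) p) Filter.atTop (nhds 0) ↔
      (Filter.Tendsto (fun n => ((u n).2 : EuclideanSpace ℝ (Fin d))) Filter.atTop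
          (nhds (p.2 : EuclideanSpace ℝ (Fin d))) ∧
        Filter.Tendsto (fun n => ‖(u n).1 - p.1‖) Filter.atTop (nhds 0)) :=
  dT_convergence_iff_general hτb hT hK u p
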